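/- arXiv:1607.04796 — 4 statements merged into one kernel-verified Lean document; each statement's English description precedes it below -/
import Mathlib

section
/- Let f_ν^α be the AST density with location μ, scale σ, skewness α ∈ (0,1) and ν ≥ 1 degrees of freedom. Then D(f_ν^α ‖ f_{ν+1}^α) = D(f_ν^{1/2} ‖ f_{ν+1}^{1/2}); that is, the Kullback–Leibler divergence between AST densities with consecutive degrees of freedom does not depend on the skewness parameter α. -/
open Real MeasureTheory Filter Topology

noncomputable def K (ν : ℝ) : ℝ := Real.Gamma ((ν+1)/2) / (Real.sqrt (π * ν) * Real.Gamma (ν/2))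

noncomputable def ast (α ν μ σ x : ℝ) : ℝ :=
  if x ≤ μ then (K ν / σ) * (1 + (1/ν) * ((x-μ)/(2*α*σ))^2) ^ (-(ν+1)/2)
  else (K ν / σ) * (1 + (1/ν) * ((x-μ)/(2*(1-α)*σ))^2) ^ (-(ν+1)/2)

noncomputable def tdens (ν y : ℝ) : ℝ := K ν * (1 + y^2/ν) ^ (-(ν+1)/2)

/-
On each side of `μ` the AST density is `σ⁻¹` times a Student-t density rescaled by `2ασ` (left)
or `2(1-α)σ` (right), and so is its Kullback–Leibler integrand. That integrand is even, so the two
half-lines contribute `2ασ` and `2(1-α)σ` times one and the same half-line integral for the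
standard t densities, and `σ⁻¹ (2ασ + 2(1-α)σ) = 2` does not depend on `α`.
-/

open Set

section EvenHalfLine

variable {E : Type*} [NormedAddCommGroup E]

theorem setIntegral_Ioi_comp_div [NormedSpace ℝ E] (g : ℝ → E) {c : ℝ} (hc : 0 < c) :
    ∫ y in Ioi 0, g (y / c) = c • ∫ t in Ioi 0, g t := by
  simpa [div_eq_mul_inv] using integral_comp_mul_right_Ioi g 0 (inv_pos.mpr hc)

theorem integrableOn_Ioi_comp_div_iff (g : ℝ → E) {c : ℝ} (hc : 0 < c) :
    IntegrableOn (fun y => g (y / c)) (Ioi 0) ↔ IntegrableOn g (Ioi 0) := by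
  simpa [div_eq_mul_inv] using integrableOn_Ioi_comp_mul_right_iff g 0 (inv_pos.mpr hc)

theorem setIntegral_Iic_eq_Ioi_of_even [NormedSpace ℝ E] {f : ℝ → E} (hf : ∀ t, f (-t) = f t) :
    ∫ y in Iic 0, f y = ∫ y in Ioi 0, f y := by
  simpa [hf] using integral_comp_neg_Iic 0 f

theorem integrableOn_Iic_of_even {f : ℝ → E} (hf : ∀ t, f (-t) = f t)
    (h : IntegrableOn f (Ioi 0)) : IntegrableOn f (Iic 0) := by
  have h' : IntegrableOn f (Ici (-0)) := by
    rwa [neg_zero, integrableOn_Ici_iff_integrableOn_Ioi]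
  simpa [hf] using h'.comp_neg_Iic

theorem integral_ite_comp_div_of_even [NormedSpace ℝ E] {g : ℝ → E} (hg : ∀ t, g (-t) = g t)
    {a b : ℝ} (ha : 0 < a) (hb : 0 < b) :
    ∫ y, (if y ≤ 0 then g (y / a) else g (y / b)) = (a + b) • ∫ t in Ioi 0, g t := by
  have hg_div : ∀ c, ∀ t, g (-t / c) = g (t / c) := fun c t => by rw [neg_div, hg]
  by_cases hint : IntegrableOn g (Ioi 0)
  · have hIic : IntegrableOn (fun y => g (y / a)) (Iic 0) :=
      integrableOn_Iic_of_even (hg_div a) ((integrableOn_Ioi_comp_div_iff g ha).mpr hint)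
    have hIoi : IntegrableOn (fun y => g (y / b)) (Ioi 0) :=
      (integrableOn_Ioi_comp_div_iff g hb).mpr hint
    calc ∫ y, (if y ≤ 0 then g (y / a) else g (y / b))
        = (∫ y in Iic 0, g (y / a)) + ∫ y in Ioi 0, g (y / b) := by
          rw [← compl_Iic, ← integral_piecewise measurableSet_Iic hIic (by rwa [compl_Iic])]
          rfl
      _ = a • (∫ t in Ioi 0, g t) + b • ∫ t in Ioi 0, g t := by
          rw [setIntegral_Iic_eq_Ioi_of_even (hg_div a), setIntegral_Ioi_comp_div g ha,
            setIntegral_Ioi_comp_div g hb]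
      _ = (a + b) • ∫ t in Ioi 0, g t := (add_smul a b _).symm
  · have : ¬ Integrable (fun y => if y ≤ 0 then g (y / a) else g (y / b)) := fun h => by
      refine hint ((integrableOn_Ioi_comp_div_iff g hb).mp ?_)
      refine h.integrableOn.congr_fun (fun y hy => ?_) measurableSet_Ioi
      exact if_neg (not_le.mpr hy)
    rw [integral_undef this, integral_undef hint, smul_zero]

end EvenHalfLine

noncomputable def tKLIntegrand (ν t : ℝ) : ℝ := tdens ν t * Real.log (tdens ν t / tdens (ν + 1) t)

theorem tdens_neg (ν t : ℝ) : tdens ν (-t) = tdens ν t := by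
  simp [tdens]

theorem tKLIntegrand_neg (ν t : ℝ) : tKLIntegrand ν (-t) = tKLIntegrand ν t := by
  simp [tKLIntegrand, tdens_neg]

theorem ast_of_le {α ν μ σ x : ℝ} (hx : x ≤ μ) :
    ast α ν μ σ x = σ⁻¹ * tdens ν ((x - μ) / (2 * α * σ)) := by
  rw [ast, if_pos hx, tdens]
  ring_nf

theorem ast_of_lt {α ν μ σ x : ℝ} (hx : μ < x) :
    ast α ν μ σ x = σ⁻¹ * tdens ν ((x - μ) / (2 * (1 - α) * σ)) := by
  rw [ast, if_neg (not_le.mpr hx), tdens]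
  ring_nf

theorem ast_mul_log_div_ast (α ν μ σ x : ℝ) (hσ : σ ≠ 0) :
    ast α ν μ σ x * Real.log (ast α ν μ σ x / ast α (ν + 1) μ σ x) =
      σ⁻¹ * (if x - μ ≤ 0 then tKLIntegrand ν ((x - μ) / (2 * α * σ))
        else tKLIntegrand ν ((x - μ) / (2 * (1 - α) * σ))) := by
  have hσ' : σ⁻¹ ≠ 0 := inv_ne_zero hσ
  rcases le_or_gt x μ with hx | hx
  · rw [if_pos (sub_nonpos.mpr hx), ast_of_le hx, ast_of_le hx, mul_div_mul_left _ _ hσ',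
      tKLIntegrand, mul_assoc]
  · rw [if_neg (not_le.mpr (sub_pos.mpr hx)), ast_of_lt hx, ast_of_lt hx,
      mul_div_mul_left _ _ hσ', tKLIntegrand, mul_assoc]

theorem integral_ast_mul_log_div_ast {α : ℝ} (hα : α ∈ Ioo (0 : ℝ) 1) (ν μ : ℝ) {σ : ℝ}
    (hσ : 0 < σ) :
    ∫ x, ast α ν μ σ x * Real.log (ast α ν μ σ x / ast α (ν + 1) μ σ x) =
      2 * ∫ t in Ioi 0, tKLIntegrand ν t := by
  have ha : 0 < 2 * α * σ := by have := hα.1; positivity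
  have hb : 0 < 2 * (1 - α) * σ := by have := sub_pos.mpr hα.2; positivity
  simp_rw [ast_mul_log_div_ast α ν μ _ _ hσ.ne']
  rw [integral_const_mul, integral_sub_right_eq_self (fun y => if y ≤ 0
      then tKLIntegrand ν (y / (2 * α * σ)) else tKLIntegrand ν (y / (2 * (1 - α) * σ))) μ,
    integral_ite_comp_div_of_even (tKLIntegrand_neg ν) ha hb, smul_eq_mul]
  field_simp
  ring

theorem ast_kl_independent_of_skewness_general (α ν μ σ : ℝ) (hα : α ∈ Set.Ioo (0:ℝ) 1)
    (hσ : 0 < σ) :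
    ∫ x : ℝ, ast α ν μ σ x * Real.log (ast α ν μ σ x / ast α (ν+1) μ σ x)
      = ∫ x : ℝ, ast (1/2) ν μ σ x * Real.log (ast (1/2) ν μ σ x / ast (1/2) (ν+1) μ σ x) := by
  rw [integral_ast_mul_log_div_ast hα ν μ hσ,
    integral_ast_mul_log_div_ast (by norm_num) ν μ hσ]

theorem ast_kl_independent_of_skewness (α ν μ σ : ℝ) (hα : α ∈ Set.Ioo (0:ℝ) 1)
    (hν : 1 ≤ ν) (hσ : 0 < σ) :
    ∫ x : ℝ, ast α ν μ σ x * Real.log (ast α ν μ σ x / ast α (ν+1) μ σ x)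
      = ∫ x : ℝ, ast (1/2) ν μ σ x * Real.log (ast (1/2) ν μ σ x / ast (1/2) (ν+1) μ σ x) :=
  ast_kl_independent_of_skewness_general α ν μ σ hα hσ
end

section
/- Let f_ν^α be the AST density (μ=0, σ=1) with skewness α ∈ (0,1). For every ν ≥ 2, D(f_ν^α ‖ f_{ν−1}^α) = D(f_ν^{1/2} ‖ f_{ν−1}^{1/2}). -/
open Real MeasureTheory Filter Topology

open Set in
lemma aux_integrableOn_Iic_comp_neg_iff (f : ℝ → ℝ) :
    IntegrableOn f (Iic (0:ℝ)) ↔ IntegrableOn (fun x => f (-x)) (Ioi (0:ℝ)) := by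
  have m : MeasurableEmbedding fun x : ℝ => -x := (Homeomorph.neg ℝ).measurableEmbedding
  have h := m.integrableOn_map_iff (f := f) (s := Iic (0:ℝ)) (μ := (volume : Measure ℝ))
  rw [Measure.map_neg_eq_self] at h
  rw [h]
  have hpre : (fun x : ℝ => -x) ⁻¹' Iic (0:ℝ) = Ici (0:ℝ) := by
    ext x; simp
  rw [hpre, integrableOn_Ici_iff_integrableOn_Ioi]
  rfl

open Set in
lemma aux_even_integrableOn_Iic_iff (f : ℝ → ℝ) (hf : ∀ x, f (-x) = f x) :
    IntegrableOn f (Iic (0:ℝ)) ↔ IntegrableOn f (Ioi (0:ℝ)) := by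
  rw [aux_integrableOn_Iic_comp_neg_iff]
  simp only [hf]

open Set in
lemma aux_even_integral_Iic (f : ℝ → ℝ) (hf : ∀ x, f (-x) = f x) :
    ∫ x in Iic (0:ℝ), f x = ∫ x in Ioi (0:ℝ), f x := by
  have h1 : ∫ x in Iic (0:ℝ), f x = ∫ x in Iic (0:ℝ), f (-x) := by
    simp only [hf]
  rw [h1, integral_comp_neg_Iic, neg_zero]

open Set in
lemma aux_integrableOn_div_Ioi_iff (f : ℝ → ℝ) {c : ℝ} (hc : 0 < c) :
    IntegrableOn (fun y : ℝ => f (y / c)) (Ioi (0:ℝ)) ↔ IntegrableOn f (Ioi (0:ℝ)) := by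
  have h := integrableOn_Ioi_comp_mul_left_iff f 0 (inv_pos.mpr hc)
  simpa [div_eq_inv_mul] using h

open Set in
lemma aux_integral_div_Ioi (f : ℝ → ℝ) {c : ℝ} (hc : 0 < c) :
    ∫ y in Ioi (0:ℝ), f (y / c) = c * ∫ t in Ioi (0:ℝ), f t := by
  have h := integral_comp_mul_left_Ioi f 0 (inv_pos.mpr hc)
  simpa [div_eq_inv_mul, smul_eq_mul] using h

open Set in
lemma aux_key (f : ℝ → ℝ) (hf : ∀ x, f (-x) = f x) {c₁ c₂ : ℝ} (h1 : 0 < c₁) (h2 : 0 < c₂) :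
    ∫ y : ℝ, (if y ≤ 0 then f (y / c₁) else f (y / c₂))
      = (c₁ + c₂) * ∫ t in Ioi (0:ℝ), f t := by
  set H : ℝ → ℝ := fun y => if y ≤ 0 then f (y / c₁) else f (y / c₂) with hHdef
  have hf1 : ∀ x : ℝ, f (-x / c₁) = f (x / c₁) := by
    intro x; rw [neg_div, hf]
  have hEq1 : EqOn H (fun y => f (y / c₁)) (Iic (0:ℝ)) := by
    intro y hy; simp only [H, if_pos (mem_Iic.mp hy)]
  have hEq2 : EqOn H (fun y => f (y / c₂)) (Ioi (0:ℝ)) := by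
    intro y hy; simp only [H, if_neg (not_le.mpr (mem_Ioi.mp hy))]
  by_cases hP : IntegrableOn f (Ioi (0:ℝ))
  · have hi1' : IntegrableOn (fun y : ℝ => f (y / c₁)) (Iic (0:ℝ)) := by
      rw [aux_even_integrableOn_Iic_iff _ hf1]
      exact (aux_integrableOn_div_Ioi_iff f h1).mpr hP
    have hi1 : IntegrableOn H (Iic (0:ℝ)) :=
      hi1'.congr_fun (fun y hy => (hEq1 hy).symm) measurableSet_Iic
    have hi2' : IntegrableOn (fun y : ℝ => f (y / c₂)) (Ioi (0:ℝ)) :=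
      (aux_integrableOn_div_Ioi_iff f h2).mpr hP
    have hi2 : IntegrableOn H (Ioi (0:ℝ)) :=
      hi2'.congr_fun (fun y hy => (hEq2 hy).symm) measurableSet_Ioi
    have hsplit : ∫ y : ℝ, H y = (∫ y in Iic (0:ℝ), H y) + ∫ y in Ioi (0:ℝ), H y := by
      rw [← setIntegral_union (Iic_disjoint_Ioi le_rfl) measurableSet_Ioi hi1 hi2,
        Iic_union_Ioi, setIntegral_univ]
    rw [hsplit,
      setIntegral_congr_fun measurableSet_Iic hEq1,
      setIntegral_congr_fun measurableSet_Ioi hEq2,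
      aux_even_integral_Iic _ hf1,
      aux_integral_div_Ioi f h1, aux_integral_div_Ioi f h2]
    ring
  · have hH : ¬ Integrable H := by
      intro h
      apply hP
      have h2' : IntegrableOn H (Ioi (0:ℝ)) := h.integrableOn
      exact (aux_integrableOn_div_Ioi_iff f h2).mp
        (h2'.congr_fun hEq2 measurableSet_Ioi)
    rw [integral_undef hH, integral_undef hP, mul_zero]

theorem ast_kl_down_independent_of_skewness (α ν : ℝ) (hα : α ∈ Set.Ioo (0:ℝ) 1)
    (hν : 2 ≤ ν) :
    ∫ y : ℝ, ast α ν 0 1 y * Real.log (ast α ν 0 1 y / ast α (ν-1) 0 1 y)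
      = ∫ y : ℝ, ast (1/2) ν 0 1 y * Real.log (ast (1/2) ν 0 1 y / ast (1/2) (ν-1) 0 1 y) := by
  obtain ⟨hα0, hα1⟩ := hα
  set g : ℝ → ℝ := fun t => tdens ν t * Real.log (tdens ν t / tdens (ν-1) t) with hgdef
  have hge : ∀ x, g (-x) = g x := by
    intro x; simp only [g, tdens, neg_sq]
  have hrep : ∀ β : ℝ,
      (fun y : ℝ => ast β ν 0 1 y * Real.log (ast β ν 0 1 y / ast β (ν-1) 0 1 y))
        = fun y : ℝ => if y ≤ 0 then g (y / (2*β)) else g (y / (2*(1-β))) := by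
    intro β
    funext y
    have hb1 : ∀ w : ℝ, (1:ℝ) + (1/w) * ((y-0)/(2*β*1))^2 = 1 + (y/(2*β))^2/w := by
      intro w; ring
    have hb2 : ∀ w : ℝ, (1:ℝ) + (1/w) * ((y-0)/(2*(1-β)*1))^2 = 1 + (y/(2*(1-β)))^2/w := by
      intro w; ring
    by_cases hy : y ≤ 0
    · simp only [ast, if_pos hy, if_pos hy, div_one, hb1, tdens, g]
    · simp only [ast, if_neg hy, if_neg hy, div_one, hb2, tdens, g]
  rw [hrep α, hrep (1/2), aux_key g hge (by linarith) (by linarith),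
    aux_key g hge (by norm_num) (by norm_num : (0:ℝ) < 2*(1-1/2))]
  ring
end

section
/- Let φ^α be the skewed normal density with location μ, scale σ, skewness α ∈ (0,1) (piecewise Gaussian with scale 2ασ on the left of μ and 2(1−α)σ on the right), and let f_ν^α be the AST density with the same μ, σ, α. Then D(f_ν^α ‖ φ^α) = D(f_ν^{1/2} ‖ φ^{1/2}), i.e. the KL divergence from the AST density to the skewed normal with matching skewness does not depend on α. -/
/-!
Both densities are `σ⁻¹` times a two-piece rescaling of an even kernel (`tdens ν`, resp.
`gaussKernel`) with scale `2ασ` left of `μ` and `2(1-α)σ` right of it. The scales cancel in the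
density ratio, so the KL integrand is `σ⁻¹` times the same two-piece rescaling of the even profile
`g = tdens ν * log (tdens ν / gaussKernel)`. The left half therefore integrates to `2α ∫₀^∞ g` and
the right half to `2(1-α) ∫₀^∞ g`, which sum to `2 ∫₀^∞ g` for every `α`. For an even `g` this
needs no integrability hypothesis: without integrability both sides are `0`.
-/

open Real MeasureTheory Filter Topology

noncomputable def skewNormal (α μ σ x : ℝ) : ℝ :=
  if x ≤ μ then (1/(σ * Real.sqrt (2*π))) * Real.exp (-((x-μ)/(2*α*σ))^2)
  else (1/(σ * Real.sqrt (2*π))) * Real.exp (-((x-μ)/(2*(1-α)*σ))^2)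

open Set

section TwoPiece

variable {E : Type*} [NormedAddCommGroup E] {f : ℝ → E} {a b : ℝ}

noncomputable def twoPiece (f : ℝ → E) (a b x : ℝ) : E := if x ≤ 0 then f (x / a) else f (x / b)

theorem integrableOn_Ioi_comp_div_iff_s7 (f : ℝ → E) (hb : 0 < b) :
    IntegrableOn (fun x => f (x / b)) (Ioi 0) ↔ IntegrableOn f (Ioi 0) := by
  simpa [div_eq_inv_mul] using integrableOn_Ioi_comp_mul_left_iff f 0 (inv_pos.2 hb)

theorem Function.Even.integrableOn_Iic_comp_div (hf : f.Even) (ha : 0 < a)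
    (hfi : IntegrableOn f (Ioi 0)) : IntegrableOn (fun x => f (x / a)) (Iic 0) := by
  have hi : IntegrableOn (fun x => f (x / a)) (Ici (-0)) := by
    rw [neg_zero, integrableOn_Ici_iff_integrableOn_Ioi]
    exact (integrableOn_Ioi_comp_div_iff_s7 f ha).2 hfi
  simpa only [neg_div, hf.eq] using hi.comp_neg_Iic

variable [NormedSpace ℝ E]

theorem setIntegral_Ioi_comp_div_s7 (f : ℝ → E) (hb : 0 < b) :
    ∫ x in Ioi 0, f (x / b) = b • ∫ t in Ioi 0, f t := by
  simpa [div_eq_inv_mul] using integral_comp_mul_left_Ioi f 0 (inv_pos.2 hb)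

theorem Function.Even.setIntegral_Iic_comp_div (hf : f.Even) (ha : 0 < a) :
    ∫ x in Iic 0, f (x / a) = a • ∫ t in Ioi 0, f t := by
  rw [← neg_zero, ← integral_comp_neg_Ioi]
  simp only [neg_div, hf.eq, neg_zero]
  exact setIntegral_Ioi_comp_div_s7 f ha

theorem Function.Even.integral_twoPiece [CompleteSpace E] (hf : f.Even) (ha : 0 < a)
    (hb : 0 < b) :
    ∫ x, twoPiece f a b x = (a + b) • ∫ t in Ioi 0, f t := by
  have hleft : EqOn (twoPiece f a b) (fun x => f (x / a)) (Iic 0) := fun x hx => if_pos hx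
  have hright : EqOn (twoPiece f a b) (fun x => f (x / b)) (Ioi 0) :=
    fun x hx => if_neg (not_le.2 hx)
  by_cases hfi : IntegrableOn f (Ioi 0)
  · rw [← intervalIntegral.integral_Iic_add_Ioi
      ((hf.integrableOn_Iic_comp_div ha hfi).congr_fun hleft.symm measurableSet_Iic)
      (((integrableOn_Ioi_comp_div_iff_s7 f hb).2 hfi).congr_fun hright.symm measurableSet_Ioi),
      setIntegral_congr_fun measurableSet_Iic hleft, setIntegral_congr_fun measurableSet_Ioi hright,
      hf.setIntegral_Iic_comp_div ha, setIntegral_Ioi_comp_div_s7 f hb, add_smul]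
  · have hFi : ¬Integrable (twoPiece f a b) := fun hF =>
      hfi <| (integrableOn_Ioi_comp_div_iff_s7 f hb).1 <|
        hF.integrableOn.congr_fun hright measurableSet_Ioi
    rw [integral_undef hFi, integral_undef hfi, smul_zero]

end TwoPiece

noncomputable def gaussKernel (t : ℝ) : ℝ := exp (-t ^ 2) / √(2 * π)

theorem ast_eq_twoPiece (α ν μ σ x : ℝ) :
    ast α ν μ σ x = σ⁻¹ * twoPiece (tdens ν) (2 * α * σ) (2 * (1 - α) * σ) (x - μ) := by
  simp only [ast, twoPiece, tdens, sub_nonpos, one_div_mul_eq_div]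
  split_ifs <;> ring

theorem skewNormal_eq_twoPiece (α μ σ x : ℝ) :
    skewNormal α μ σ x = σ⁻¹ * twoPiece gaussKernel (2 * α * σ) (2 * (1 - α) * σ) (x - μ) := by
  simp only [skewNormal, twoPiece, gaussKernel, sub_nonpos]
  split_ifs <;> ring

theorem twoPiece_mul_log_div {f h : ℝ → ℝ} {a b c : ℝ} (hc : c ≠ 0) (x : ℝ) :
    c * twoPiece f a b x * log (c * twoPiece f a b x / (c * twoPiece h a b x)) =
      c * twoPiece (fun t => f t * log (f t / h t)) a b x := by
  simp only [twoPiece]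
  split_ifs <;> rw [mul_div_mul_left _ _ hc, mul_assoc]

theorem integral_ast_mul_log_div_skewNormal {α μ σ : ℝ} (ν : ℝ) (hα : α ∈ Ioo (0 : ℝ) 1)
    (hσ : 0 < σ) :
    ∫ x, ast α ν μ σ x * log (ast α ν μ σ x / skewNormal α μ σ x) =
      2 * ∫ t in Ioi 0, tdens ν t * log (tdens ν t / gaussKernel t) := by
  obtain ⟨hα₀, hα₁⟩ := hα
  have heven : (fun t => tdens ν t * log (tdens ν t / gaussKernel t)).Even := fun t => by
    simp only [tdens, gaussKernel, neg_sq]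
  simp_rw [ast_eq_twoPiece, skewNormal_eq_twoPiece, twoPiece_mul_log_div (inv_ne_zero hσ.ne')]
  rw [integral_const_mul, integral_sub_right_eq_self (twoPiece _ _ _) μ,
    heven.integral_twoPiece (by positivity) (mul_pos (by linarith) hσ), smul_eq_mul]
  field_simp
  ring

theorem ast_kl_to_skewNormal_independent_general (α ν μ σ : ℝ) (hα : α ∈ Set.Ioo (0:ℝ) 1)
    (hσ : 0 < σ) :
    ∫ x : ℝ, ast α ν μ σ x * Real.log (ast α ν μ σ x / skewNormal α μ σ x)
      = ∫ x : ℝ, ast (1/2) ν μ σ x * Real.log (ast (1/2) ν μ σ x / skewNormal (1/2) μ σ x) := by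
  rw [integral_ast_mul_log_div_skewNormal ν hα hσ,
    integral_ast_mul_log_div_skewNormal ν ⟨by norm_num, by norm_num⟩ hσ]

theorem ast_kl_to_skewNormal_independent (α ν μ σ : ℝ) (hα : α ∈ Set.Ioo (0:ℝ) 1)
    (hν : 1 ≤ ν) (hσ : 0 < σ) :
    ∫ x : ℝ, ast α ν μ σ x * Real.log (ast α ν μ σ x / skewNormal α μ σ x)
      = ∫ x : ℝ, ast (1/2) ν μ σ x * Real.log (ast (1/2) ν μ σ x / skewNormal (1/2) μ σ x) :=
  ast_kl_to_skewNormal_independent_general α ν μ σ hα hσ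
end

section
/- For any two positive probability densities f, g on ℝ and any α ∈ (0,1), if f and g are both of the 'two-piece' form built from a common symmetric density h via f(y) = h(y/(2α)) on y ≤ 0 and f(y) = h(y/(2(1−α))) on y > 0 (and similarly g from a symmetric density k), then D(f ‖ g) = 2α D_{≤0}(h‖k) + 2(1−α) D_{>0}(h‖k) = D(h ‖ k), where D_{≤0}, D_{>0} denote the KL integrals restricted to the negative and positive half-lines and h, k are symmetric about 0. -/
open Real MeasureTheory Filter Topology

theorem two_piece_kl (h k : ℝ → ℝ) (α : ℝ) (hα : α ∈ Set.Ioo (0:ℝ) 1)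
    (hpos : ∀ y, 0 < h y) (kpos : ∀ y, 0 < k y)
    (hsym : ∀ y, h (-y) = h y) (ksym : ∀ y, k (-y) = k y)
    (hint : ∫ y : ℝ, h y = 1) (kint : ∫ y : ℝ, k y = 1)
    (f g : ℝ → ℝ)
    (hf : ∀ y, f y = if y ≤ 0 then h (y/(2*α)) else h (y/(2*(1-α))))
    (hg : ∀ y, g y = if y ≤ 0 then k (y/(2*α)) else k (y/(2*(1-α))))
    (hklint : Integrable (fun y => h y * Real.log (h y / k y)))
    (fklint : Integrable (fun y => f y * Real.log (f y / g y))) :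
    (∫ y : ℝ, f y * Real.log (f y / g y)
       = 2 * α * (∫ y in Set.Iic (0:ℝ), h y * Real.log (h y / k y))
         + 2 * (1 - α) * (∫ y in Set.Ioi (0:ℝ), h y * Real.log (h y / k y))) ∧
    (∫ y : ℝ, f y * Real.log (f y / g y) = ∫ y : ℝ, h y * Real.log (h y / k y)) := by
  obtain ⟨hα0, hα1⟩ := hα
  have h1α : 0 < 1 - α := by linarith
  set φ : ℝ → ℝ := fun y => h y * Real.log (h y / k y) with hφ
  have φsym : ∀ y, φ (-y) = φ y := fun y => by simp [hφ, hsym y, ksym y]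
  -- symmetry: Iic integral = Ioi integral
  have hAB : (∫ y in Set.Iic (0:ℝ), φ y) = ∫ y in Set.Ioi (0:ℝ), φ y := by
    have e : (∫ x in Set.Iic (0:ℝ), φ x) = ∫ x in Set.Iic (0:ℝ), φ (-x) :=
      setIntegral_congr_fun measurableSet_Iic (fun x _ => (φsym x).symm)
    rw [e, integral_comp_neg_Iic, neg_zero]
  -- change of variables on Iic side
  have hIic : (∫ y in Set.Iic (0:ℝ), φ (y/(2*α)))
      = 2 * α * ∫ y in Set.Ioi (0:ℝ), φ y := by
    have e1 : (∫ y in Set.Iic (0:ℝ), φ (y/(2*α)))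
        = ∫ y in Set.Ioi (0:ℝ), φ ((2*α)⁻¹ * y) := by
      rw [← neg_zero, ← integral_comp_neg_Iic, neg_zero]
      refine setIntegral_congr_fun measurableSet_Iic (fun x _ => ?_)
      rw [show (2*α)⁻¹ * -x = -(x/(2*α)) from by ring, φsym]
    rw [e1, integral_comp_mul_left_Ioi φ 0 (by positivity : (0:ℝ) < (2*α)⁻¹)]
    rw [mul_zero, smul_eq_mul, inv_inv]
  have hIoi : (∫ y in Set.Ioi (0:ℝ), φ (y/(2*(1-α))))
      = 2 * (1-α) * ∫ y in Set.Ioi (0:ℝ), φ y := by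
    have e1 : (∫ y in Set.Ioi (0:ℝ), φ (y/(2*(1-α))))
        = ∫ y in Set.Ioi (0:ℝ), φ ((2*(1-α))⁻¹ * y) := by
      refine setIntegral_congr_fun measurableSet_Ioi (fun x _ => ?_)
      rw [show x/(2*(1-α)) = (2*(1-α))⁻¹ * x by ring]
    rw [e1, integral_comp_mul_left_Ioi φ 0 (by positivity : (0:ℝ) < (2*(1-α))⁻¹)]
    rw [mul_zero, smul_eq_mul, inv_inv]
  -- split the f-integral
  have hsplit : (∫ y : ℝ, f y * Real.log (f y / g y))
      = (∫ y in Set.Iic (0:ℝ), f y * Real.log (f y / g y))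
        + ∫ y in Set.Ioi (0:ℝ), f y * Real.log (f y / g y) :=
    (intervalIntegral.integral_Iic_add_Ioi fklint.integrableOn fklint.integrableOn).symm
  have hfi : (∫ y in Set.Iic (0:ℝ), f y * Real.log (f y / g y))
      = ∫ y in Set.Iic (0:ℝ), φ (y/(2*α)) := by
    refine setIntegral_congr_fun measurableSet_Iic (fun x hx => ?_)
    have hx0 : x ≤ 0 := hx
    simp [hφ, hf x, hg x, if_pos hx0]
  have hgi : (∫ y in Set.Ioi (0:ℝ), f y * Real.log (f y / g y))
      = ∫ y in Set.Ioi (0:ℝ), φ (y/(2*(1-α))) := by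
    refine setIntegral_congr_fun measurableSet_Ioi (fun x hx => ?_)
    have hx0 : ¬ x ≤ 0 := not_le.mpr hx
    simp [hφ, hf x, hg x, if_neg hx0]
  have key : (∫ y : ℝ, f y * Real.log (f y / g y))
      = 2 * α * (∫ y in Set.Iic (0:ℝ), φ y)
        + 2 * (1 - α) * ∫ y in Set.Ioi (0:ℝ), φ y := by
    rw [hsplit, hfi, hgi, hIic, hIoi, hAB]
  refine ⟨key, ?_⟩
  have hsplit' : (∫ y : ℝ, φ y)
      = (∫ y in Set.Iic (0:ℝ), φ y) + ∫ y in Set.Ioi (0:ℝ), φ y :=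
    (intervalIntegral.integral_Iic_add_Ioi hklint.integrableOn hklint.integrableOn).symm
  rw [key, hsplit', hAB]; ring
end
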